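/- arXiv:1203.1433 — 3 statements merged into one kernel-verified Lean document; each statement's English description precedes it below -/
import Mathlib

section
/- Let φ: Δ × 𝒜 → ℂ be a holomorphic function on the product of the disk Δ with a disk 𝒜 ∋ α₀, with φ(λ, α₀) ≡ 0, and suppose λ₀ ∈ Δ is a pinch, i.e. φ(λ₀, α) ≡ 0 as a function of α. Write φ(λ,α) = (λ−λ₀)^{l₀} φ₁(λ,α) with l₀ ≥ 1 maximal, so that φ₁(λ₀,·) ≢ 0. Then the image of the map Φ₁: (λ,α) ↦ (λ, φ₁(λ,α)) contains a bidisk Δ²_r(λ₀,0) of some radius r > 0 centered at (λ₀,0); consequently the union of the graphs {(λ, φ(λ,α)) : λ ∈ Δ, α ∈ 𝒜} contains Δ²_r(λ₀,0) ∩ {|z| < c|λ−λ₀|^{l₀}} for some constant c > 0. -/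
open Metric Filter Set Topology

/-!
Dividing `φ(λ, α₀) = 0` by `(λ - λ₀)^{l₀}` shows `φ₁(λ, α₀) = 0` for `λ ≠ λ₀`, hence for all `λ`
by continuity. Since `φ₁(λ₀, ·) ≢ 0`, its zero at `α₀` is isolated, so `|φ₁(λ₀, ·)| ≥ m > 0` on a
small circle around `α₀`. For `λ` near `λ₀` still `|φ₁(λ, ·)| > m/2` on that circle while
`φ₁(λ, α₀) = 0`, and the maximum principle for `1 / (φ₁(λ, ·) - w)` shows that `φ₁(λ, ·)` takes
every value `w` with `|w| < m/4` inside the circle. The statement for `φ` follows by writing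
`z = (λ - λ₀)^{l₀} w`.
-/

theorem eqOn_zero_of_sub_pow_mul_eq_zero {𝕜 : Type*} [NontriviallyNormedField 𝕜] {f : 𝕜 → 𝕜}
    {U : Set 𝕜} (hU : IsOpen U) (hf : ContinuousOn f U) {z₀ : 𝕜} {n : ℕ}
    (h : ∀ z ∈ U, (z - z₀) ^ n * f z = 0) : EqOn f 0 U := by
  have hoff : ∀ z ∈ U, z ≠ z₀ → f z = 0 := fun z hz hne =>
    (mul_eq_zero.1 (h z hz)).resolve_left (pow_ne_zero _ (sub_ne_zero.2 hne))
  intro z hz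
  rcases eq_or_ne z z₀ with rfl | hne
  · have hpunct : f =ᶠ[𝓝[≠] z] 0 := by
      filter_upwards [nhdsWithin_le_nhds (hU.mem_nhds hz), self_mem_nhdsWithin] with y hyU hy
      exact hoff y hyU hy
    exact (((hf.continuousAt (hU.mem_nhds hz)).eventuallyEq_nhds_iff_eventuallyEq_nhdsNE
      continuousAt_const).1 hpunct).eq_of_nhds
  · exact hoff z hz hne

theorem AnalyticOnNhd.exists_closedBall_subset_forall_sphere_ne_zero {g : ℂ → ℂ} {U : Set ℂ}
    {c : ℂ} (hg : AnalyticOnNhd ℂ g U) (hU : IsPreconnected U) (hcU : U ∈ 𝓝 c)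
    (hne : ∃ a ∈ U, g a ≠ 0) :
    ∃ s > 0, closedBall c s ⊆ U ∧ ∀ z ∈ sphere c s, g z ≠ 0 := by
  obtain ⟨a, haU, ha⟩ := hne
  have hc : c ∈ U := mem_of_mem_nhds hcU
  have hiso : ∀ᶠ z in 𝓝[≠] c, g z ≠ 0 :=
    (hg c hc).eventually_eq_zero_or_eventually_ne_zero.resolve_left fun h =>
      ha (hg.eqOn_zero_of_preconnected_of_eventuallyEq_zero hU hc h haU)
  obtain ⟨ε, hε, hball⟩ := Metric.eventually_nhds_iff.1
    ((show ∀ᶠ z in 𝓝 c, z ∈ U from hcU).and (eventually_nhdsWithin_iff.1 hiso))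
  refine ⟨ε / 2, half_pos hε, fun z hz => (hball ?_).1, fun z hz => (hball ?_).2 ?_⟩
  · exact (mem_closedBall.1 hz).trans_lt (half_lt_self hε)
  · exact (mem_sphere.1 hz).trans_lt (half_lt_self hε)
  · exact ne_of_mem_sphere hz (half_pos hε).ne'

theorem IsCompact.eventually_forall_dist_lt {X Y Z : Type*} [TopologicalSpace X]
    [TopologicalSpace Y] [PseudoMetricSpace Z] {F : X × Y → Z} {K : Set Y} (hK : IsCompact K)
    {x₀ : X} (hF : ∀ y ∈ K, ContinuousAt F (x₀, y)) {ε : ℝ} (hε : 0 < ε) :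
    ∀ᶠ x in 𝓝 x₀, ∀ y ∈ K, dist (F (x, y)) (F (x₀, y)) < ε := by
  refine hK.eventually_forall_of_forall_eventually fun y hy => ?_
  have hslice : ContinuousAt (fun p : X × Y => F (x₀, p.2)) (x₀, y) :=
    (hF y hy).comp (f := fun p : X × Y => (x₀, p.2))
      (continuousAt_const.prodMk continuousAt_snd)
  have hdist := (hF y hy).dist hslice
  simpa using hdist.eventually (gt_mem_nhds (by simpa using hε))

theorem exists_mem_closedBall_eq_of_norm_lt_norm_sub {f : ℂ → ℂ} {c w : ℂ} {s : ℝ}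
    (hs : 0 < s) (hf : DifferentiableOn ℂ f (closedBall c s)) (hc : f c = 0)
    (hw : ∀ z ∈ sphere c s, ‖w‖ < ‖f z - w‖) : ∃ z ∈ closedBall c s, f z = w := by
  by_contra! hne
  have hw0 : 0 < ‖w‖ := norm_pos_iff.2 fun h => hne c (mem_closedBall_self hs.le) (hc.trans h.symm)
  have hinv : DiffContOnCl ℂ (fun z => (f z - w)⁻¹) (ball c s) := by
    refine DifferentiableOn.diffContOnCl ?_
    rw [closure_ball c hs.ne']
    exact (hf.sub_const w).inv fun z hz => sub_ne_zero.2 (hne z hz)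
  obtain ⟨z, hz, hmax⟩ := Complex.exists_mem_frontier_isMaxOn_norm isBounded_ball
    (nonempty_ball.2 hs) hinv
  rw [frontier_ball c hs.ne'] at hz
  have hcz : ‖w‖⁻¹ ≤ ‖f z - w‖⁻¹ := by
    simpa [hc] using hmax (subset_closure (mem_ball_self hs))
  exact (hw z hz).not_ge ((inv_le_inv₀ hw0 (hw0.trans (hw z hz))).1 hcz)

theorem exists_pos_forall_exists_mem_closedBall_eq {E : Type*} [NormedAddCommGroup E]
    [NormedSpace ℂ E] {F : E × ℂ → ℂ} {U : Set (E × ℂ)} {x₀ : E} {c : ℂ} {s : ℝ} (hs : 0 < s)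
    (hU : IsOpen U) (hF : DifferentiableOn ℂ F U) (hsub : {x₀} ×ˢ closedBall c s ⊆ U)
    (hc : ∀ᶠ x in 𝓝 x₀, F (x, c) = 0) (hsphere : ∀ z ∈ sphere c s, F (x₀, z) ≠ 0) :
    ∃ r > 0, ∀ x w, ‖x - x₀‖ < r → ‖w‖ < r →
      ∃ z ∈ closedBall c s, (x, z) ∈ U ∧ F (x, z) = w := by
  have hcont : ∀ z ∈ closedBall c s, ContinuousAt F (x₀, z) := fun z hz =>
    (hF.differentiableAt (hU.mem_nhds (hsub ⟨mem_singleton x₀, hz⟩))).continuousAt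
  obtain ⟨z₁, hz₁, hmin⟩ := (isCompact_sphere c s).exists_isMinOn
    (NormedSpace.sphere_nonempty.2 hs.le) fun z hz =>
      ((hcont z (sphere_subset_closedBall hz)).comp
        (continuousAt_const.prodMk continuousAt_id)).norm.continuousWithinAt
  set m := ‖F (x₀, z₁)‖
  have hm : 0 < m := norm_pos_iff.2 (hsphere z₁ hz₁)
  obtain ⟨δ, hδ, hnear⟩ := Metric.eventually_nhds_iff.1
    (((isCompact_closedBall c s).eventually_forall_of_forall_eventually
        (P := fun x z => (x, z) ∈ U) fun z hz => hU.mem_nhds (hsub ⟨mem_singleton x₀, hz⟩)).and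
      (((isCompact_sphere c s).eventually_forall_dist_lt
        (fun z hz => hcont z (sphere_subset_closedBall hz)) (half_pos hm)).and hc))
  refine ⟨min δ (m / 4), by positivity, fun x w hx hw => ?_⟩
  obtain ⟨hxU, hxF, hxc⟩ :=
    hnear (y := x) (by rw [dist_eq_norm]; exact hx.trans_le (min_le_left _ _))
  have hdiff : DifferentiableOn ℂ (fun z => F (x, z)) (closedBall c s) :=
    hF.comp (differentiableOn_const x |>.prodMk differentiableOn_id) fun z hz => hxU z hz
  obtain ⟨z, hz, hFz⟩ := exists_mem_closedBall_eq_of_norm_lt_norm_sub hs hdiff hxc fun z hz => by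
    have hwm : ‖w‖ < m / 4 := hw.trans_le (min_le_right _ _)
    have h₁ : m ≤ ‖F (x₀, z)‖ := hmin hz
    have h₂ := norm_sub_norm_le (F (x₀, z)) (F (x, z))
    have h₃ := norm_sub_norm_le (F (x, z)) w
    rw [← dist_eq_norm, dist_comm] at h₂
    linarith [hxF z hz]
  exact ⟨z, hz, hxU z hz, hFz⟩

theorem exists_norm_lt_and_eq_mul_of_norm_lt_mul {𝕜 : Type*} [NormedField 𝕜] {x w : 𝕜} {r : ℝ}
    (h : ‖w‖ < r * ‖x‖) : ∃ v, ‖v‖ < r ∧ w = x * v := by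
  have hx : x ≠ 0 := by
    rintro rfl
    simp only [norm_zero, mul_zero] at h
    exact (norm_nonneg w).not_gt h
  refine ⟨x⁻¹ * w, ?_, by rw [mul_inv_cancel_left₀ hx]⟩
  rwa [norm_mul, norm_inv, inv_mul_lt_iff₀ (norm_pos_iff.2 hx), mul_comm]

theorem pinch_local_structure_general (ρ : ℝ) (α₀ : ℂ)
    (φ φ₁ : ℂ × ℂ → ℂ)
    (hφ₁ : AnalyticOnNhd ℂ φ₁ ((Metric.ball (0 : ℂ) 1) ×ˢ (Metric.ball α₀ ρ)))
    (hbase : ∀ lam ∈ Metric.ball (0 : ℂ) 1, φ (lam, α₀) = 0)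
    (lam₀ : ℂ) (hlam₀ : lam₀ ∈ Metric.ball (0 : ℂ) 1)
    (l₀ : ℕ)
    (hfact : ∀ p ∈ (Metric.ball (0 : ℂ) 1) ×ˢ (Metric.ball α₀ ρ),
      φ p = (p.1 - lam₀) ^ l₀ * φ₁ p)
    (hmax : ∃ a ∈ Metric.ball α₀ ρ, φ₁ (lam₀, a) ≠ 0) :
    ∃ r > (0 : ℝ),
      (∀ p : ℂ × ℂ, ‖p.1 - lam₀‖ < r → ‖p.2‖ < r →
        ∃ lam ∈ Metric.ball (0 : ℂ) 1, ∃ a ∈ Metric.ball α₀ ρ,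
          lam = p.1 ∧ φ₁ (lam, a) = p.2) ∧
      ∃ c > (0 : ℝ), ∀ p : ℂ × ℂ, ‖p.1 - lam₀‖ < r →
        ‖p.2‖ < r → ‖p.2‖ < c * ‖p.1 - lam₀‖ ^ l₀ →
        ∃ lam ∈ Metric.ball (0 : ℂ) 1, ∃ a ∈ Metric.ball α₀ ρ,
          lam = p.1 ∧ φ (lam, a) = p.2 := by
  have hα₀ : ball α₀ ρ ∈ 𝓝 α₀ := ball_mem_nhds α₀ (pos_of_mem_ball hmax.choose_spec.1)
  have hbase₁ : EqOn (fun lam => φ₁ (lam, α₀)) 0 (ball 0 1) :=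
    eqOn_zero_of_sub_pow_mul_eq_zero isOpen_ball
      (hφ₁.continuousOn.comp (continuousOn_id.prodMk continuousOn_const)
        fun lam hlam => ⟨hlam, mem_of_mem_nhds hα₀⟩)
      fun lam hlam => by rw [← hfact (lam, α₀) ⟨hlam, mem_of_mem_nhds hα₀⟩, hbase lam hlam]
  obtain ⟨s, hs, hsub, hsphere⟩ :=
    AnalyticOnNhd.exists_closedBall_subset_forall_sphere_ne_zero
      (fun a ha => (hφ₁ (lam₀, a) ⟨hlam₀, ha⟩).comp (analyticAt_const.prod analyticAt_id))
      (convex_ball α₀ ρ).isPreconnected hα₀ hmax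
  obtain ⟨r, hr, hsolve⟩ := exists_pos_forall_exists_mem_closedBall_eq hs
    (isOpen_ball.prod isOpen_ball) hφ₁.differentiableOn (prod_mono (by simpa using hlam₀) hsub)
    (eventually_of_mem (isOpen_ball.mem_nhds hlam₀) hbase₁) hsphere
  refine ⟨r, hr, fun p h₁ h₂ => ?_, r, hr, fun ⟨lam, w⟩ h₁ _ h₃ => ?_⟩
  · obtain ⟨a, -, ⟨hlam, ha⟩, hval⟩ := hsolve p.1 p.2 h₁ h₂
    exact ⟨p.1, hlam, a, ha, rfl, hval⟩
  · obtain ⟨v, hv, rfl⟩ := exists_norm_lt_and_eq_mul_of_norm_lt_mul (x := (lam - lam₀) ^ l₀)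
      (show ‖w‖ < r * ‖(lam - lam₀) ^ l₀‖ by rwa [norm_pow])
    obtain ⟨a, -, ⟨hlam, ha⟩, hval⟩ := hsolve lam v h₁ hv
    exact ⟨lam, hlam, a, ha, rfl, by rw [hfact _ ⟨hlam, ha⟩, hval]⟩

/-- **Local structure of a pinch.** Let `φ : Δ × 𝒜 → ℂ` be holomorphic on the product of
the unit disk with a parameter disk `𝒜 = ball α₀ ρ`, with `φ(·, α₀) ≡ 0`, and let
`λ₀ ∈ Δ` be a pinch, i.e. `φ(λ₀, ·) ≡ 0`. Write `φ(λ,α) = (λ - λ₀)^{l₀} φ₁(λ,α)` with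
`l₀ ≥ 1` maximal, so that `φ₁(λ₀, ·) ≢ 0`. Then the image of
`Φ₁ : (λ,α) ↦ (λ, φ₁(λ,α))` contains a bidisk of some radius `r > 0` centered at
`(λ₀, 0)`; consequently the union of the graphs `{(λ, φ(λ,α))}` contains
`Δ²_r(λ₀,0) ∩ {|z| < c |λ - λ₀|^{l₀}}` for some constant `c > 0`. -/
theorem pinch_local_structure (ρ : ℝ) (hρ : 0 < ρ) (α₀ : ℂ)
    (φ φ₁ : ℂ × ℂ → ℂ)
    (hφ : AnalyticOnNhd ℂ φ ((Metric.ball (0 : ℂ) 1) ×ˢ (Metric.ball α₀ ρ)))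
    (hφ₁ : AnalyticOnNhd ℂ φ₁ ((Metric.ball (0 : ℂ) 1) ×ˢ (Metric.ball α₀ ρ)))
    (hbase : ∀ lam ∈ Metric.ball (0 : ℂ) 1, φ (lam, α₀) = 0)
    (lam₀ : ℂ) (hlam₀ : lam₀ ∈ Metric.ball (0 : ℂ) 1)
    (hpinch : ∀ a ∈ Metric.ball α₀ ρ, φ (lam₀, a) = 0)
    (l₀ : ℕ) (hl₀ : 1 ≤ l₀)
    (hfact : ∀ p ∈ (Metric.ball (0 : ℂ) 1) ×ˢ (Metric.ball α₀ ρ),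
      φ p = (p.1 - lam₀) ^ l₀ * φ₁ p)
    (hmax : ∃ a ∈ Metric.ball α₀ ρ, φ₁ (lam₀, a) ≠ 0) :
    ∃ r > (0 : ℝ),
      (∀ p : ℂ × ℂ, ‖p.1 - lam₀‖ < r → ‖p.2‖ < r →
        ∃ lam ∈ Metric.ball (0 : ℂ) 1, ∃ a ∈ Metric.ball α₀ ρ,
          lam = p.1 ∧ φ₁ (lam, a) = p.2) ∧
      ∃ c > (0 : ℝ), ∀ p : ℂ × ℂ, ‖p.1 - lam₀‖ < r →
        ‖p.2‖ < r → ‖p.2‖ < c * ‖p.1 - lam₀‖ ^ l₀ →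
        ∃ lam ∈ Metric.ball (0 : ℂ) 1, ∃ a ∈ Metric.ball α₀ ρ,
          lam = p.1 ∧ φ (lam, a) = p.2 :=
  pinch_local_structure_general ρ α₀ φ φ₁ hφ₁ hbase lam₀ hlam₀ l₀ hfact hmax
end

section
/- The series f(λ,z) = Σ_{n=1}^∞ 3^{−4n³} · ∏_{j=1}^n [z − (2λ/3)^j] · λ^{−n²} z^n converges normally on compact subsets of ℂ* × ℂ, and hence defines a holomorphic function f on the ring domain ℂ* × ℂ. Moreover, for every integer l ≥ 2, substituting z = φ_l(λ) = (2/3)^l λ^l makes the series a finite sum of polynomials; in particular f extends holomorphically along every curve C_l = {z = (2λ/3)^l}. -/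
/-!
On a compact subset of `ℂ* × ℂ` the quantities `|λ|⁻¹`, `|λ|`, `|z|` are bounded by some `C ≥ 2`,
and then the `n`-th term is at most `C^{4n²} / 3^{4n³} = (C / 3ⁿ)^{4n²}`, which is eventually
below `2⁻ⁿ`. A summable bound on a ball turns, by the Cauchy estimate (here the Schwarz lemma),
into a summable bound on the derivatives on the half ball, so the sum is holomorphic.

On the curve `z = (2λ/3)^l` the factor `j = l` of the product kills every term with `n ≥ l`,
and for `n < l` the factor `z^n = (2λ/3)^{ln}` with `ln ≥ n²` cancels the pole `λ^{-n²}`.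
-/

open Metric Filter Set

noncomputable section

/-- The `n`-th term `3^{-4n³} ∏_{j=1}^n [z - (2λ/3)^j] λ^{-n²} z^n` of the series
defining the function of Example 1. -/
def trm (n : ℕ) (p : ℂ × ℂ) : ℂ :=
  (3 : ℂ) ^ (-(4 * (n : ℤ) ^ 3)) * (∏ j ∈ Finset.Icc 1 n, (p.2 - (2 * p.1 / 3) ^ j)) *
    p.1 ^ (-((n : ℤ) ^ 2)) * p.2 ^ n

/-- The function `f(λ,z) = Σ_{n≥1} 3^{-4n³} ∏_{j=1}^n [z - (2λ/3)^j] λ^{-n²} z^n` of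
Example 1. -/
def fEx (p : ℂ × ℂ) : ℂ := ∑' n : ℕ, trm (n + 1) p

section NormalConvergence

variable {ι E F : Type*} [NormedAddCommGroup E] [NormedSpace ℂ E]
  [NormedAddCommGroup F] [NormedSpace ℂ F]

theorem norm_fderiv_le_of_forall_mem_ball_norm_le {f : E → F} {c : E} {R M : ℝ}
    (hd : DifferentiableOn ℂ f (ball c R)) (hR : 0 < R) (hM : ∀ y ∈ ball c R, ‖f y‖ ≤ M) :
    ‖fderiv ℂ f c‖ ≤ 2 * M / R := by
  refine Complex.norm_fderiv_le_div_of_mapsTo_ball hd (fun y hy => ?_) hR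
  rw [mem_closedBall, dist_eq_norm, two_mul]
  exact (norm_sub_le _ _).trans (add_le_add (hM y hy) (hM c (mem_ball_self hR)))

theorem differentiableOn_tsum_of_isCompact_norm_le [CompleteSpace F] [ProperSpace E]
    {f : ι → E → F} {U : Set E} (hU : IsOpen U) (hf : ∀ i, DifferentiableOn ℂ (f i) U)
    (hK : ∀ K, IsCompact K → K ⊆ U → ∃ u : ι → ℝ, Summable u ∧ ∀ i, ∀ x ∈ K, ‖f i x‖ ≤ u i) :
    DifferentiableOn ℂ (fun x => ∑' i, f i x) U := by
  intro x hx
  obtain ⟨r, hr, hrU⟩ := Metric.nhds_basis_closedBall.mem_iff.1 (hU.mem_nhds hx)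
  obtain ⟨u, hu, hfu⟩ := hK _ (isCompact_closedBall x r) hrU
  have hr2 : 0 < r / 2 := half_pos hr
  have hx₀ : x ∈ ball x (r / 2) := mem_ball_self hr2
  have hball : ∀ y ∈ ball x (r / 2), ball y (r / 2) ⊆ closedBall x r := fun y hy =>
    (ball_subset_ball' (by linarith [mem_ball.1 hy])).trans ball_subset_closedBall
  have hderiv :
      ∀ i, ∀ y ∈ ball x (r / 2), ‖fderiv ℂ (f i) y‖ ≤ 2 * u i / (r / 2) :=
    fun i y hy => norm_fderiv_le_of_forall_mem_ball_norm_le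
      ((hf i).mono ((hball y hy).trans hrU)) hr2 fun z hz => hfu i z (hball y hy hz)
  have hsum : Summable fun i => f i x :=
    .of_norm_bounded hu fun i => hfu i x (mem_closedBall_self hr.le)
  refine (hasFDerivAt_tsum_of_isPreconnected ((hu.mul_left 2).div_const _) isOpen_ball
    (convex_ball x _).isPreconnected (fun i y hy => ?_) hderiv hx₀ hsum hx₀)
    |>.differentiableAt.differentiableWithinAt
  have hyU : y ∈ U := hrU (hball y hy (mem_ball_self hr2))
  exact ((hf i).differentiableAt (hU.mem_nhds hyU)).hasFDerivAt

end NormalConvergence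

theorem summable_pow_sq_div_pow_cube {C : ℝ} (hC : 0 ≤ C) :
    Summable fun n : ℕ => C ^ (4 * n ^ 2) / 3 ^ (4 * n ^ 3) := by
  have hratio : Tendsto (fun n : ℕ => C / 3 ^ n) atTop (nhds 0) :=
    tendsto_const_nhds.div_atTop (tendsto_pow_atTop_atTop_of_one_lt (by norm_num))
  refine .of_norm_bounded_eventually_nat summable_geometric_two ?_
  filter_upwards [hratio.eventually (ge_mem_nhds (by norm_num : (0 : ℝ) < 1 / 2))] with n hn
  have hterm : C ^ (4 * n ^ 2) / 3 ^ (4 * n ^ 3) = (C / 3 ^ n) ^ (4 * n ^ 2) := by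
    rw [div_pow, ← pow_mul]; ring_nf
  rw [hterm, Real.norm_of_nonneg (by positivity)]
  calc (C / 3 ^ n) ^ (4 * n ^ 2) ≤ (1 / 2) ^ (4 * n ^ 2) := by gcongr
    _ ≤ (1 / 2) ^ n := pow_le_pow_of_le_one (by norm_num) (by norm_num) (by nlinarith)

theorem IsCompact.exists_uniform_bound_of_fst_ne_zero {K : Set (ℂ × ℂ)} (hK : IsCompact K)
    (hK₀ : K ⊆ {p | p.1 ≠ 0}) :
    ∃ C : ℝ, 2 ≤ C ∧ ∀ p ∈ K, ‖p.1‖⁻¹ ≤ C ∧ ‖p.1‖ ≤ C ∧ ‖p.2‖ ≤ C := by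
  have hcont : ContinuousOn (fun p : ℂ × ℂ => ‖p.1‖⁻¹ + ‖p.1‖ + ‖p.2‖) K := fun p hp => by
    have hp₀ : ‖p.1‖ ≠ 0 := norm_ne_zero_iff.2 (hK₀ hp)
    fun_prop (disch := exact hp₀)
  obtain ⟨C, hC⟩ := hK.exists_bound_of_continuousOn hcont
  refine ⟨max C 2, le_max_right _ _, fun p hp => ?_⟩
  have hsum := (Real.le_norm_self _).trans ((hC p hp).trans (le_max_left C 2))
  have hinv : 0 ≤ ‖p.1‖⁻¹ := by positivity
  have h₁ := norm_nonneg p.1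
  have h₂ := norm_nonneg p.2
  exact ⟨by linarith, by linarith, by linarith⟩

theorem norm_trm_le {C : ℝ} (hC : 2 ≤ C) {n : ℕ} (hn : 1 ≤ n) {p : ℂ × ℂ}
    (h1 : ‖p.1‖⁻¹ ≤ C) (h2 : ‖p.1‖ ≤ C) (h3 : ‖p.2‖ ≤ C) :
    ‖trm n p‖ ≤ C ^ (4 * n ^ 2) / 3 ^ (4 * n ^ 3) := by
  have hC1 : 1 ≤ C := by linarith
  have hfactor : ∀ j ∈ Finset.Icc 1 n, ‖p.2 - (2 * p.1 / 3) ^ j‖ ≤ C ^ (2 * n) := by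
    intro j hj
    have hj := (Finset.mem_Icc.1 hj).2
    have hlam : ‖(2 * p.1 / 3 : ℂ)‖ ≤ C := by
      rw [norm_div, norm_mul, Complex.norm_ofNat, Complex.norm_ofNat]
      linarith [norm_nonneg p.1]
    calc ‖p.2 - (2 * p.1 / 3) ^ j‖ ≤ ‖p.2‖ + ‖(2 * p.1 / 3 : ℂ)‖ ^ j := by
          simpa only [norm_pow] using norm_sub_le p.2 ((2 * p.1 / 3) ^ j)
      _ ≤ C ^ n + C ^ n := by
          gcongr
          · exact h3.trans (le_self_pow₀ hC1 (by omega))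
          · exact (pow_le_pow_left₀ (norm_nonneg _) hlam j).trans (pow_le_pow_right₀ hC1 hj)
      _ ≤ C ^ (2 * n) := by
          rw [← two_mul, two_mul n, pow_add]
          gcongr
          exact hC.trans (le_self_pow₀ hC1 (by omega))
  have hprod : ‖∏ j ∈ Finset.Icc 1 n, (p.2 - (2 * p.1 / 3) ^ j)‖ ≤ C ^ (2 * n ^ 2) := by
    rw [norm_prod]
    refine (Finset.prod_le_prod (fun _ _ => norm_nonneg _) hfactor).trans_eq ?_
    rw [Finset.prod_const, Nat.card_Icc, Nat.add_sub_cancel, ← pow_mul]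
    ring_nf
  have hzpow : ‖p.1 ^ (-((n : ℤ) ^ 2))‖ ≤ C ^ n ^ 2 := by
    rw [norm_zpow, ← Nat.cast_pow, zpow_neg, zpow_natCast, ← inv_pow]
    exact pow_le_pow_left₀ (by positivity) h1 _
  have hpow : ‖p.2 ^ n‖ ≤ C ^ n ^ 2 :=
    (norm_pow p.2 n).trans_le ((pow_le_pow_left₀ (norm_nonneg _) h3 n).trans
      (pow_le_pow_right₀ hC1 (Nat.le_self_pow two_ne_zero n)))
  have hthree : ‖(3 : ℂ) ^ (-(4 * (n : ℤ) ^ 3))‖ = (3 ^ (4 * n ^ 3))⁻¹ := by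
    rw [norm_zpow, ← Nat.cast_ofNat (R := ℤ), ← Nat.cast_pow, ← Nat.cast_mul, zpow_neg,
      zpow_natCast]
    norm_num
  rw [trm, norm_mul, norm_mul, norm_mul, hthree]
  calc _ ≤ (3 ^ (4 * n ^ 3) : ℝ)⁻¹ * C ^ (2 * n ^ 2) * C ^ n ^ 2 * C ^ n ^ 2 := by gcongr
    _ = C ^ (4 * n ^ 2) / 3 ^ (4 * n ^ 3) := by ring

theorem exists_summable_bound_trm (K : Set (ℂ × ℂ)) (hK : IsCompact K)
    (hK₀ : K ⊆ {p | p.1 ≠ 0}) :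
    ∃ u : ℕ → ℝ, Summable u ∧ ∀ n : ℕ, ∀ p ∈ K, ‖trm (n + 1) p‖ ≤ u n := by
  obtain ⟨C, hC, hCK⟩ := hK.exists_uniform_bound_of_fst_ne_zero hK₀
  refine ⟨fun n => C ^ (4 * (n + 1) ^ 2) / 3 ^ (4 * (n + 1) ^ 3),
    (summable_nat_add_iff (f := fun n : ℕ => C ^ (4 * n ^ 2) / 3 ^ (4 * n ^ 3)) 1).2
      (summable_pow_sq_div_pow_cube (by linarith)), fun n p hp => ?_⟩
  obtain ⟨h1, h2, h3⟩ := hCK p hp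
  exact norm_trm_le hC n.succ_pos h1 h2 h3

theorem differentiableAt_trm (n : ℕ) {p : ℂ × ℂ} (hp : p.1 ≠ 0) :
    DifferentiableAt ℂ (trm n) p := by
  classical
  have hfactor (j : ℕ) :
      DifferentiableAt ℂ (fun q : ℂ × ℂ => q.2 - (2 * q.1 / 3) ^ j) p := by fun_prop
  have hprod : DifferentiableAt ℂ
      (fun q : ℂ × ℂ => ∏ j ∈ Finset.Icc 1 n, (q.2 - (2 * q.1 / 3) ^ j)) p :=
    (HasFDerivAt.finsetProd fun j _ => (hfactor j).hasFDerivAt).differentiableAt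
  exact (((differentiableAt_const _).mul hprod).mul
    (differentiableAt_fst.zpow (Or.inl hp))).mul (differentiableAt_snd.pow n)

theorem trm_curve_eq_zero {l n : ℕ} (hl : 1 ≤ l) (hln : l ≤ n) (lam : ℂ) :
    trm n (lam, (2 * lam / 3) ^ l) = 0 := by
  rw [trm, Finset.prod_eq_zero (i := l) (Finset.mem_Icc.2 ⟨hl, hln⟩) (sub_self _)]
  ring

theorem fEx_curve_eq_sum {l : ℕ} (hl : 1 ≤ l) (lam : ℂ) :
    fEx (lam, (2 * lam / 3) ^ l) =
      ∑ n ∈ Finset.Icc 1 (l - 1), trm n (lam, (2 * lam / 3) ^ l) := by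
  rw [fEx, tsum_eq_sum (s := Finset.range (l - 1)) fun n hn =>
      trm_curve_eq_zero hl (by rw [Finset.mem_range] at hn; omega) lam,
    Finset.range_eq_Ico, Finset.sum_Ico_add' (fun n => trm n _), zero_add,
    Finset.Ico_add_one_right_eq_Icc]

open Polynomial in
def trmCurvePoly (l n : ℕ) : ℂ[X] :=
  C ((3 : ℂ) ^ (-(4 * (n : ℤ) ^ 3)) * (2 / 3) ^ (l * n)) *
    (∏ j ∈ Finset.Icc 1 n, ((C (2 / 3) * X) ^ l - (C (2 / 3) * X) ^ j)) * X ^ (l * n - n ^ 2)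

open Polynomial in
theorem trm_curve_eq_eval {l n : ℕ} (hnl : n ≤ l) {lam : ℂ} (hlam : lam ≠ 0) :
    trm n (lam, (2 * lam / 3) ^ l) = (trmCurvePoly l n).eval lam := by
  have hexp : n ^ 2 ≤ l * n := by rw [sq]; exact Nat.mul_le_mul_right n hnl
  have hpole : lam ^ (-((n : ℤ) ^ 2)) * lam ^ (l * n) = lam ^ (l * n - n ^ 2) := by
    rw [← zpow_natCast, ← zpow_natCast, ← zpow_add₀ hlam, Nat.cast_sub hexp]
    push_cast; ring_nf
  have hc : 2 * lam / 3 = 2 / 3 * lam := by ring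
  simp only [trmCurvePoly, trm, eval_mul, eval_C, eval_prod, eval_sub, eval_pow, eval_X, hc]
  rw [← hpole, ← pow_mul, mul_pow]
  ring

/-- **Example 1, construction.** The series defining `f` converges normally on compact
subsets of `ℂ* × ℂ`, so `f` is holomorphic on the ring domain `ℂ* × ℂ`; moreover, for
every integer `l ≥ 2`, substituting `z = (2λ/3)^l` makes the series a finite sum of
polynomials; in particular `f` extends holomorphically along every curve
`C_l = {z = (2λ/3)^l}`. -/
theorem example1_construction :
    (∀ K : Set (ℂ × ℂ), IsCompact K → K ⊆ {p : ℂ × ℂ | p.1 ≠ 0} →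
      ∃ u : ℕ → ℝ, Summable u ∧ ∀ n : ℕ, ∀ p ∈ K, ‖trm (n + 1) p‖ ≤ u n) ∧
    DifferentiableOn ℂ fEx {p : ℂ × ℂ | p.1 ≠ 0} ∧
    ∀ l : ℕ, 2 ≤ l →
      (∀ lam : ℂ, lam ≠ 0 →
        fEx (lam, (2 * lam / 3) ^ l) =
          ∑ n ∈ Finset.Icc 1 (l - 1), trm n (lam, (2 * lam / 3) ^ l)) ∧
      ∃ P : Polynomial ℂ, ∀ lam : ℂ, lam ≠ 0 →
        fEx (lam, (2 * lam / 3) ^ l) = P.eval lam := by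
  refine ⟨exists_summable_bound_trm, ?_, fun l hl =>
    ⟨fun lam _ => fEx_curve_eq_sum (by omega) lam, ?_⟩⟩
  · exact differentiableOn_tsum_of_isCompact_norm_le
      (isOpen_ne_fun continuous_fst continuous_const)
      (fun n p hp => (differentiableAt_trm (n + 1) hp).differentiableWithinAt)
      exists_summable_bound_trm
  · refine ⟨∑ n ∈ Finset.Icc 1 (l - 1), trmCurvePoly l n, fun lam hlam => ?_⟩
    rw [fEx_curve_eq_sum (by omega), Polynomial.eval_finsetSum]
    exact Finset.sum_congr rfl fun n hn => trm_curve_eq_eval (by grind) hlam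

end
end

section
/- Define the map ℱ: l² → l² ⊕ l² by ℱ({z_k}_{k=1}^∞) = ({z_k(z_k − 1/k)}_{k≥1}, {z_k z_j}_{j>k≥1}). Then ℱ is a holomorphic map between these complex Hilbert spaces, and its zero set is exactly the sequence of points {Z_k}_{k≥1} together with 0, where Z_k = (0,…,0,1/k,0,…) has 1/k in the k-th coordinate and 0 elsewhere. In particular, the zero set of a holomorphic map on an infinite-dimensional Hilbert space can be a convergent sequence of isolated points together with its (non-isolated) limit point, containing no analytic disk. -/
/-! The coordinates of `ℱ` say that `z_k ∈ {0, 1/k}` for every `k` and that at most one `z_k`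
is non-zero, so the zero set is the countable set `{0} ∪ {Z_k}`. A holomorphic disk in it would be
a connected countable subset of a metric space, hence a point. Holomorphy of `ℱ` comes from
writing it as a continuous quadratic map minus a continuous linear one. -/

open Metric Filter Set

noncomputable section

/-- The index type of the second factor of `l² ⊕ l²`: the pairs `(k, j)` with `j > k`. -/
def PairIdx : Type := {q : ℕ × ℕ // q.1 < q.2}

open scoped ENNReal

namespace lp

variable {α β ι 𝕜 E : Type*} {p : ℝ≥0∞}

section Reindex

variable [NormedAddCommGroup E]

theorem sum_rpow_comp_le (hp : 0 < p.toReal) (x : lp (fun _ : α => E) p) {e : ι → α}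
    (he : e.Injective) (s : Finset ι) :
    ∑ i ∈ s, ‖x (e i)‖ ^ p.toReal ≤ ‖x‖ ^ p.toReal := by
  simpa using sum_rpow_le_norm_rpow hp x (s.map ⟨e, he⟩)

theorem sum_rpow_extend_zero_le (hp : 0 < p.toReal) (x : lp (fun _ : α => E) p) {j : α → β}
    (hj : j.Injective) (s : Finset β) :
    ∑ b ∈ s, ‖Function.extend j x 0 b‖ ^ p.toReal ≤ ‖x‖ ^ p.toReal := by
  rw [← Finset.sum_preimage j s hj.injOn _ fun b _ hb => by
    simp [Function.extend_apply' _ _ _ hb, hp.ne']]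
  simp_rw [hj.extend_apply]
  exact sum_rpow_le_norm_rpow hp x _

variable [NormedField 𝕜] [NormedSpace 𝕜 E] [Fact (1 ≤ p)]

def compCLM (hp : p ≠ ∞) (e : ι → α) (he : e.Injective) :
    lp (fun _ : α => E) p →L[𝕜] lp (fun _ : ι => E) p :=
  have hp' : 0 < p.toReal := ENNReal.toReal_pos (zero_lt_one.trans_le Fact.out).ne' hp
  LinearMap.mkContinuous
    { toFun x := ⟨x ∘ e, memℓp_gen' (sum_rpow_comp_le hp' x he)⟩
      map_add' _ _ := rfl
      map_smul' _ _ := rfl }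
    1 fun x => by
      rw [one_mul]
      exact norm_le_of_forall_sum_le hp' (norm_nonneg x) (sum_rpow_comp_le hp' x he)

@[simp]
theorem compCLM_apply (hp : p ≠ ∞) (e : ι → α) (he : e.Injective) (x : lp (fun _ : α => E) p)
    (i : ι) : compCLM (𝕜 := 𝕜) hp e he x i = x (e i) := rfl

def extendZeroCLM (hp : p ≠ ∞) (j : α → β) (hj : j.Injective) :
    lp (fun _ : α => E) p →L[𝕜] lp (fun _ : β => E) p :=
  have hp' : 0 < p.toReal := ENNReal.toReal_pos (zero_lt_one.trans_le Fact.out).ne' hp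
  LinearMap.mkContinuous
    { toFun x := ⟨Function.extend j x 0, memℓp_gen' (sum_rpow_extend_zero_le hp' x hj)⟩
      map_add' x y := by
        ext b
        have h := congrFun (Function.extend_add j x y 0 0) b
        rw [add_zero] at h
        exact h
      map_smul' c x := by
        ext b
        have h := congrFun (Function.extend_smul c j x 0) b
        rw [smul_zero] at h
        exact h }
    1 fun x => by
      rw [one_mul]
      exact norm_le_of_forall_sum_le hp' (norm_nonneg x) (sum_rpow_extend_zero_le hp' x hj)

@[simp]
theorem extendZeroCLM_apply_self (hp : p ≠ ∞) {j : α → β} (hj : j.Injective)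
    (x : lp (fun _ : α => E) p) (a : α) : extendZeroCLM (𝕜 := 𝕜) hp j hj x (j a) = x a :=
  hj.extend_apply _ _ a

theorem extendZeroCLM_apply_of_notMem (hp : p ≠ ∞) {j : α → β} (hj : j.Injective)
    (x : lp (fun _ : α => E) p) {b : β} (hb : b ∉ range j) :
    extendZeroCLM (𝕜 := 𝕜) hp j hj x b = 0 :=
  Function.extend_apply' _ _ _ hb

end Reindex

section Outer

variable [NormedField 𝕜] in
theorem sum_rpow_mul_le (hp : 0 < p.toReal) (x : lp (fun _ : α => 𝕜) p)
    (y : lp (fun _ : β => 𝕜) p) (s : Finset (α × β)) :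
    ∑ ab ∈ s, ‖x ab.1 * y ab.2‖ ^ p.toReal ≤ (‖x‖ * ‖y‖) ^ p.toReal := by
  classical
  calc ∑ ab ∈ s, ‖x ab.1 * y ab.2‖ ^ p.toReal
      ≤ ∑ ab ∈ s.image Prod.fst ×ˢ s.image Prod.snd, ‖x ab.1 * y ab.2‖ ^ p.toReal :=
        Finset.sum_le_sum_of_subset_of_nonneg
          (fun ab hab => Finset.mem_product.2
            ⟨Finset.mem_image_of_mem _ hab, Finset.mem_image_of_mem _ hab⟩)
          (fun _ _ _ => by positivity)
    _ = (∑ a ∈ s.image Prod.fst, ‖x a‖ ^ p.toReal) *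
          ∑ b ∈ s.image Prod.snd, ‖y b‖ ^ p.toReal := by
        simp only [Finset.sum_product, Finset.sum_mul_sum, norm_mul,
          Real.mul_rpow (norm_nonneg _) (norm_nonneg _)]
    _ ≤ ‖x‖ ^ p.toReal * ‖y‖ ^ p.toReal :=
        mul_le_mul (sum_rpow_le_norm_rpow hp x _) (sum_rpow_le_norm_rpow hp y _)
          (Finset.sum_nonneg fun _ _ => by positivity) (by have := norm_nonneg' x; positivity)
    _ = (‖x‖ * ‖y‖) ^ p.toReal := (Real.mul_rpow (norm_nonneg' x) (norm_nonneg' y)).symm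

variable [NontriviallyNormedField 𝕜] [Fact (1 ≤ p)]

def outerL (hp : p ≠ ∞) :
    lp (fun _ : α => 𝕜) p →L[𝕜] lp (fun _ : β => 𝕜) p →L[𝕜] lp (fun _ : α × β => 𝕜) p :=
  have hp' : 0 < p.toReal := ENNReal.toReal_pos (zero_lt_one.trans_le Fact.out).ne' hp
  LinearMap.mkContinuous₂
    (LinearMap.mk₂ 𝕜
      (fun x y => (⟨fun ab => x ab.1 * y ab.2, memℓp_gen' (sum_rpow_mul_le hp' x y)⟩ :
        lp (fun _ : α × β => 𝕜) p))
      (fun _ _ _ => by ext; exact add_mul _ _ _)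
      (fun _ _ _ => by ext; exact mul_assoc _ _ _)
      (fun _ _ _ => by ext; exact mul_add _ _ _)
      (fun _ _ _ => by ext; exact mul_left_comm _ _ _))
    1 fun x y => by
      rw [one_mul]
      exact norm_le_of_forall_sum_le hp' (by positivity) (sum_rpow_mul_le hp' x y)

@[simp]
theorem outerL_apply (hp : p ≠ ∞) (x : lp (fun _ : α => 𝕜) p) (y : lp (fun _ : β => 𝕜) p)
    (ab : α × β) : outerL hp x y ab = x ab.1 * y ab.2 := rfl

end Outer
end lp

theorem forall_mul_sub_eq_zero_and_pairwise_mul_eq_zero_iff {α R : Type*} [DecidableEq α]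
    [Ring R] [NoZeroDivisors R] {x w : α → R} :
    ((∀ i, x i * (x i - w i) = 0) ∧ Pairwise fun i j => x i * x j = 0) ↔
      x = 0 ∨ ∃ i, x = Pi.single i (w i) := by
  constructor
  · rintro ⟨hdiag, hoff⟩
    by_cases hx : x = 0
    · exact .inl hx
    obtain ⟨i, hi⟩ : ∃ i, x i ≠ 0 := Function.ne_iff.1 hx
    refine .inr ⟨i, funext fun j => ?_⟩
    rcases eq_or_ne j i with rfl | hji
    · simpa [sub_eq_zero, hi] using hdiag j
    · simpa [hji, hi] using hoff hji
  · rintro (rfl | ⟨i, rfl⟩)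
    · simp [Pairwise]
    · refine ⟨fun j => ?_, fun j k hjk => ?_⟩
      · rcases eq_or_ne j i with rfl | hji <;> simp [*]
      · rcases eq_or_ne j i with rfl | hji
        · simp [hjk.symm]
        · simp [hji]

theorem IsPreconnected.constant_of_mapsTo_countable {X Y : Type*} [TopologicalSpace X]
    [MetricSpace Y] {s : Set X} (hs : IsPreconnected s) {f : X → Y} (hf : ContinuousOn f s)
    {T : Set Y} (hT : T.Countable) (hfT : MapsTo f s T) {x y : X} (hx : x ∈ s) (hy : y ∈ s) :
    f x = f y :=
  (hT.mono hfT.image_subset).isTotallyDisconnected _ subset_rfl (hs.image f hf)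
    (mem_image_of_mem f hx) (mem_image_of_mem f hy)

def pairIndex : ℕ ⊕ PairIdx → ℕ × ℕ := Sum.elim (fun k => (k, k)) fun q : PairIdx => q.1

theorem pairIndex_injective : pairIndex.Injective :=
  Function.Injective.sumElim (fun _ _ h => congrArg Prod.fst h) Subtype.val_injective
    fun _ q h => (h ▸ q.2).false

def harmonicScaling : lp (fun _ : ℕ => ℂ) 2 →L[ℂ] lp (fun _ : ℕ => ℂ) 2 :=
  lp.mapCLM (𝕜 := ℂ) 2 (fun k => ((k : ℂ) + 1)⁻¹ • ContinuousLinearMap.id ℂ ℂ) zero_le_one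
    fun k => by
      rw [norm_smul, ContinuousLinearMap.norm_id, mul_one, norm_inv, ← Nat.cast_succ,
        Complex.norm_natCast]
      exact inv_le_one_of_one_le₀ (by simp)

/-- Since `z_k (z_k - 1/k) = z_k z_k - z_k / k`, the quadratic part of every coordinate of `ℱ`
is a coordinate of `z ⊗ z`. -/
def coeureMap (x : lp (fun _ : ℕ => ℂ) 2) : lp (fun _ : ℕ ⊕ PairIdx => ℂ) 2 :=
  lp.compCLM (𝕜 := ℂ) ENNReal.ofNat_ne_top pairIndex pairIndex_injective
      (lp.outerL ENNReal.ofNat_ne_top x x) -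
    lp.extendZeroCLM (𝕜 := ℂ) ENNReal.ofNat_ne_top Sum.inl Sum.inl_injective (harmonicScaling x)

theorem differentiable_coeureMap : Differentiable ℂ coeureMap := by
  unfold coeureMap
  fun_prop

theorem coeureMap_apply_inl (x : lp (fun _ : ℕ => ℂ) 2) (k : ℕ) :
    coeureMap x (Sum.inl k) = x k * (x k - 1 / ((k : ℂ) + 1)) := by
  simp [coeureMap, pairIndex, harmonicScaling]
  ring

theorem coeureMap_apply_inr (x : lp (fun _ : ℕ => ℂ) 2) (q : PairIdx) :
    coeureMap x (Sum.inr q) = x q.1.1 * x q.1.2 := by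
  simp [coeureMap, pairIndex, lp.extendZeroCLM_apply_of_notMem]

theorem coeureMap_eq_zero_iff (x : lp (fun _ : ℕ => ℂ) 2) :
    coeureMap x = 0 ↔ x = 0 ∨ ∃ k : ℕ, x = lp.single 2 k (1 / ((k : ℂ) + 1)) := by
  have hpairs : (∀ q : PairIdx, x q.1.1 * x q.1.2 = 0) ↔ Pairwise fun k j => x k * x j = 0 :=
    ⟨fun h k j hkj => hkj.lt_or_gt.elim (fun hlt => h ⟨(k, j), hlt⟩)
      fun hgt => (mul_comm (x k) (x j)).trans (h ⟨(j, k), hgt⟩), fun h q => h q.2.ne⟩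
  rw [lp.eq_zero_iff_coeFn_eq_zero, funext_iff, Sum.forall]
  simp only [Pi.zero_apply, coeureMap_apply_inl, coeureMap_apply_inr, hpairs]
  rw [forall_mul_sub_eq_zero_and_pairwise_mul_eq_zero_iff (w := fun k : ℕ => 1 / ((k : ℂ) + 1))]
  simp only [lp.ext_iff, lp.coeFn_zero, lp.coeFn_single]

theorem countable_setOf_coeureMap_eq_zero : {x | coeureMap x = 0}.Countable := by
  refine ((countable_range fun k : ℕ => lp.single 2 k (1 / ((k : ℂ) + 1))).insert 0).mono
    fun x hx => ?_
  rcases (coeureMap_eq_zero_iff x).1 hx with rfl | ⟨k, rfl⟩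
  exacts [mem_insert _ _, mem_insert_of_mem _ (mem_range_self k)]

/-- **The example of a holomorphic map on `l²` whose zero set is a convergent sequence of
points.** There is a holomorphic (Fréchet complex-differentiable) map
`ℱ : l² → l² ⊕ l²`, `ℱ({z_k}) = ({z_k(z_k - 1/k)}, {z_k z_j}_{j>k})` (here the sequences
are indexed by `k ∈ ℕ`, the coordinate `k` playing the role of the index `k+1 ≥ 1`),
whose zero set is exactly the sequence of points `Z_k = (0,…,0,1/k,0,…)`, `k ≥ 1`,
together with `0`; in particular the zero set of a holomorphic map on an
infinite-dimensional Hilbert space can be a convergent sequence of isolated points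
together with its non-isolated limit point, and contain no analytic disk. -/
theorem coeure_example :
    ∃ F : lp (fun _ : ℕ => ℂ) 2 → lp (fun _ : ℕ ⊕ PairIdx => ℂ) 2,
      Differentiable ℂ F ∧
      (∀ x : lp (fun _ : ℕ => ℂ) 2,
        (∀ k : ℕ, F x (Sum.inl k) = x k * (x k - 1 / ((k : ℂ) + 1))) ∧
        (∀ q : PairIdx, F x (Sum.inr q) = x q.1.1 * x q.1.2)) ∧
      (∀ x : lp (fun _ : ℕ => ℂ) 2,
        F x = 0 ↔ x = 0 ∨ ∃ k : ℕ, x = lp.single 2 k (1 / ((k : ℂ) + 1))) ∧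
      ¬ ∃ γ : ℂ → lp (fun _ : ℕ => ℂ) 2,
          DifferentiableOn ℂ γ (Metric.ball (0 : ℂ) 1) ∧
          (∃ a ∈ Metric.ball (0 : ℂ) 1, ∃ b ∈ Metric.ball (0 : ℂ) 1, γ a ≠ γ b) ∧
          ∀ a ∈ Metric.ball (0 : ℂ) 1, F (γ a) = 0 := by
  refine ⟨coeureMap, differentiable_coeureMap,
    fun x => ⟨coeureMap_apply_inl x, coeureMap_apply_inr x⟩, coeureMap_eq_zero_iff, ?_⟩
  rintro ⟨γ, hγ, ⟨a, ha, b, hb, hab⟩, hγ_zero⟩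
  exact hab <| (convex_ball (0 : ℂ) 1).isPreconnected.constant_of_mapsTo_countable
    hγ.continuousOn countable_setOf_coeureMap_eq_zero (fun t ht => hγ_zero t ht) ha hb

end
end
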